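/- The integral of sin⁴(x)/x⁴ from 0 to infinity equals π/3. -/

import Mathlib

/-!
Since `∫₀^∞ t³ e^{-tx} dt = 3!/x⁴`, the integral equals
`(1/6) ∫₀^∞ ∫₀^∞ t³ e^{-tx} sin⁴x dt dx`. The integrand is nonnegative and integrable on the
quadrant, so Fubini lets us integrate in `x` first. Writing `sin⁴x = 3/8 - cos 2x/2 + cos 4x/8`,
the inner integral is `t³` times a sum of Laplace transforms of cosines, which simplifies to
`-8/(t² + 4) + 32/(t² + 16)`; integrating with `arctan` gives `-2π + 4π = 2π`, whence `π/3`.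
-/

open Real MeasureTheory Set Filter Topology
open scoped Nat

lemma integral_pow_mul_exp_neg_mul {x : ℝ} (hx : 0 < x) (n : ℕ) :
    ∫ t in Ioi 0, t ^ n * exp (-(t * x)) = n ! / x ^ (n + 1) := by
  have h := integral_rpow_mul_exp_neg_mul_Ioi (a := (n + 1 : ℕ)) (by positivity) hx
  simp_rw [Nat.cast_add_one, add_sub_cancel_right, rpow_natCast, mul_comm x] at h
  rw [h, Gamma_nat_eq_factorial, ← Nat.cast_add_one, rpow_natCast, one_div, inv_pow,
    inv_mul_eq_div]

lemma hasDerivAt_arctan_div_div {a : ℝ} (ha : a ≠ 0) (t : ℝ) :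
    HasDerivAt (fun t => arctan (t / a) / a) (t ^ 2 + a ^ 2)⁻¹ t := by
  have h := ((hasDerivAt_arctan (t / a)).comp t ((hasDerivAt_id t).div_const a)).div_const a
  exact h.congr_deriv (by field_simp; ring)

lemma tendsto_arctan_div_div {a : ℝ} (ha : 0 < a) :
    Tendsto (fun t => arctan (t / a) / a) atTop (𝓝 (π / (2 * a))) := by
  have h := ((tendsto_nhds_of_tendsto_nhdsWithin tendsto_arctan_atTop).comp
    (tendsto_id.atTop_div_const ha)).div_const a
  rwa [div_div] at h

lemma integrableOn_Ioi_inv_sq_add_sq {a : ℝ} (ha : 0 < a) :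
    IntegrableOn (fun t : ℝ => (t ^ 2 + a ^ 2)⁻¹) (Ioi 0) :=
  integrableOn_Ioi_deriv_of_nonneg' (fun t _ => hasDerivAt_arctan_div_div ha.ne' t)
    (fun t _ => by positivity) (tendsto_arctan_div_div ha)

lemma integral_Ioi_inv_sq_add_sq {a : ℝ} (ha : 0 < a) :
    ∫ t in Ioi 0, (t ^ 2 + a ^ 2)⁻¹ = π / (2 * a) := by
  rw [integral_Ioi_of_hasDerivAt_of_nonneg' (fun t _ => hasDerivAt_arctan_div_div ha.ne' t)
    (fun t _ => by positivity) (tendsto_arctan_div_div ha)]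
  simp

lemma integrableOn_exp_neg_mul_mul_of_bounded {t : ℝ} (ht : 0 < t) {g : ℝ → ℝ}
    (hg : Continuous g) {C : ℝ} (hC : ∀ x, ‖g x‖ ≤ C) :
    IntegrableOn (fun x => exp (-(t * x)) * g x) (Ioi 0) := by
  simp_rw [← neg_mul]
  exact (exp_neg_integrableOn_Ioi 0 ht).mul_bdd hg.aestronglyMeasurable (ae_of_all _ hC)

lemma integrableOn_exp_neg_mul_mul_cos {t : ℝ} (ht : 0 < t) (a : ℝ) :
    IntegrableOn (fun x => exp (-(t * x)) * cos (a * x)) (Ioi 0) :=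
  integrableOn_exp_neg_mul_mul_of_bounded ht (continuous_cos.comp (continuous_const_mul a))
    fun _ => (norm_eq_abs _).trans_le (abs_cos_le_one _)

lemma integral_exp_neg_mul_mul_cos {t : ℝ} (ht : 0 < t) (a : ℝ) :
    ∫ x in Ioi 0, exp (-(t * x)) * cos (a * x) = t / (t ^ 2 + a ^ 2) := by
  -- the real part of `∫₀^∞ e^{(-t + ia)x} dx = 1/(t - ia)`
  have hz : (-t + a * Complex.I).re < 0 := by simpa using ht
  have h := congrArg Complex.re (integral_exp_mul_complex_Ioi hz 0)
  have hre := integral_re (𝕜 := ℂ) (integrableOn_exp_mul_complex_Ioi hz 0)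
  simp only [RCLike.re_eq_complex_re] at hre
  rw [← hre] at h
  convert h using 1
  · simp [Complex.exp_re]
  · simp [Complex.div_re, Complex.normSq]
    field_simp

lemma sin_pow_four_eq_cos (x : ℝ) :
    sin x ^ 4 = 3 / 8 - cos (2 * x) / 2 + cos (4 * x) / 8 := by
  have h4 : cos (4 * x) = 2 * cos (2 * x) ^ 2 - 1 := by
    rw [show 4 * x = 2 * (2 * x) by ring, cos_two_mul]
  rw [h4, cos_two_mul, show sin x ^ 4 = (sin x ^ 2) ^ 2 by ring, sin_sq]
  ring

lemma integral_exp_neg_mul_mul_sin_pow_four {t : ℝ} (ht : 0 < t) :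
    ∫ x in Ioi 0, exp (-(t * x)) * sin x ^ 4
      = 3 / (8 * t) - t / (2 * (t ^ 2 + 2 ^ 2)) + t / (8 * (t ^ 2 + 4 ^ 2)) := by
  have hsplit : (fun x => exp (-(t * x)) * sin x ^ 4) = fun x =>
      3 / 8 * (exp (-(t * x)) * cos (0 * x)) - 1 / 2 * (exp (-(t * x)) * cos (2 * x))
        + 1 / 8 * (exp (-(t * x)) * cos (4 * x)) := by
    ext x
    rw [sin_pow_four_eq_cos, zero_mul, cos_zero]
    ring
  have hL (c a : ℝ) := (integrableOn_exp_neg_mul_mul_cos ht a).const_mul c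
  rw [hsplit, integral_add ?_ (hL _ 4), integral_sub (hL _ 0) (hL _ 2),
    integral_const_mul, integral_const_mul, integral_const_mul, integral_exp_neg_mul_mul_cos ht,
    integral_exp_neg_mul_mul_cos ht, integral_exp_neg_mul_mul_cos ht]
  · field_simp
    ring
  · exact (hL _ 0).sub (hL _ 2)

lemma integral_pow_three_mul_exp_neg_mul_mul_sin_pow_four {t : ℝ} (ht : 0 < t) :
    ∫ x in Ioi 0, t ^ 3 * exp (-(t * x)) * sin x ^ 4
      = -8 * (t ^ 2 + 2 ^ 2)⁻¹ + 32 * (t ^ 2 + 4 ^ 2)⁻¹ := by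
  simp_rw [mul_assoc (t ^ 3)]
  rw [integral_const_mul, integral_exp_neg_mul_mul_sin_pow_four ht]
  field_simp
  ring

lemma integrable_pow_three_mul_exp_neg_mul_mul_sin_pow_four :
    Integrable (Function.uncurry fun t x : ℝ => t ^ 3 * exp (-(t * x)) * sin x ^ 4)
      ((volume.restrict (Ioi 0)).prod (volume.restrict (Ioi 0))) := by
  have hcont :
      Continuous (Function.uncurry fun t x : ℝ => t ^ 3 * exp (-(t * x)) * sin x ^ 4) := by
    fun_prop
  rw [integrable_prod_iff hcont.aestronglyMeasurable]
  constructor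
  · filter_upwards [ae_restrict_mem measurableSet_Ioi] with t (ht : 0 < t)
    simp_rw [Function.uncurry_apply_pair, mul_assoc (t ^ 3)]
    exact (integrableOn_exp_neg_mul_mul_of_bounded ht (continuous_sin.pow 4)
      fun x => by simpa using pow_le_one₀ (abs_nonneg _) (abs_sin_le_one x)).const_mul _
  · refine (((integrableOn_Ioi_inv_sq_add_sq two_pos).const_mul (-8)).add
      ((integrableOn_Ioi_inv_sq_add_sq four_pos).const_mul 32)).congr ?_
    filter_upwards [ae_restrict_mem measurableSet_Ioi] with t (ht : 0 < t)
    rw [Pi.add_apply, ← integral_pow_three_mul_exp_neg_mul_mul_sin_pow_four ht]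
    refine integral_congr_ae (ae_of_all _ fun x => (norm_of_nonneg ?_).symm)
    positivity

/-- ∫₀^∞ sin⁴x/x⁴ dx = π/3. -/
theorem sin_pow_four_div_pow_four_integral :
    ∫ x in Set.Ioi (0:ℝ), Real.sin x ^ 4 / x ^ 4 = π / 3 := by
  calc ∫ x in Ioi (0:ℝ), sin x ^ 4 / x ^ 4
      = ∫ x in Ioi 0, 1 / 6 * ∫ t in Ioi 0, t ^ 3 * exp (-(t * x)) * sin x ^ 4 := by
        refine setIntegral_congr_fun measurableSet_Ioi fun x (hx : 0 < x) => ?_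
        rw [integral_mul_const, integral_pow_mul_exp_neg_mul hx]
        norm_num [Nat.factorial]
        field_simp
    _ = 1 / 6 * ∫ t in Ioi 0, ∫ x in Ioi 0, t ^ 3 * exp (-(t * x)) * sin x ^ 4 := by
        rw [integral_const_mul, integral_integral_swap
          integrable_pow_three_mul_exp_neg_mul_mul_sin_pow_four]
    _ = 1 / 6 * ∫ t in Ioi 0, (-8 * (t ^ 2 + 2 ^ 2)⁻¹ + 32 * (t ^ 2 + 4 ^ 2)⁻¹) := by
        congr 1
        exact setIntegral_congr_fun measurableSet_Ioi fun t ht =>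
          integral_pow_three_mul_exp_neg_mul_mul_sin_pow_four ht
    _ = π / 3 := by
        rw [integral_add ((integrableOn_Ioi_inv_sq_add_sq two_pos).const_mul _)
          ((integrableOn_Ioi_inv_sq_add_sq four_pos).const_mul _), integral_const_mul,
          integral_const_mul, integral_Ioi_inv_sq_add_sq two_pos,
          integral_Ioi_inv_sq_add_sq four_pos]
        ring
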